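/- arXiv:2302.11221 — 2 statements merged into one kernel-verified Lean document; each statement's English description precedes it below -/
import Mathlib

section
/- For all integers n ≥ r ≥ 0, the following identity holds in ℚ[q]: J_n^{(r)}(q) = (n−r)! · ∑_u [r]_q^{u_1} q^{∑_{i≥1} C(u_i,2)} ∏_{i≥1} [u_i]_q^{u_{i+1}}/u_i!, where the sum is over all sequences u = (u_1, u_2, …) of nonnegative integers with finite support satisfying ∑_{i≥1} u_i = n−r, with the conventions [0]_q^0 = 1 and 0! = 1 (so all but finitely many factors of the product equal 1). -/
noncomputable section

/-- `[m]_q = 1 + q + ⋯ + q^{m-1}` as a polynomial in `q` (so `[0]_q = 0`). -/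
def qNat (m : ℕ) : Polynomial ℚ := ∑ i ∈ Finset.range m, Polynomial.X ^ i

/-- The polynomials `J_n^{(r)}(q)`: `J_n^{(0)} = δ_{n,0}`, `J_r^{(r)} = 1` for
`r ≥ 1`, and for `n > r ≥ 1` the recurrence
`J_n^{(r)} = ∑_{j=1}^{n−r} [r]_q^j q^{C(j,2)} C(n−r,j) J_{n−r}^{(j)}`.
(For `n < r` we set the unconstrained value `J_n^{(r)} = 0`.) -/
def J (n r : ℕ) : Polynomial ℚ :=
  if hr : r = 0 then (if n = 0 then 1 else 0)
  else if hn : n ≤ r then (if n = r then 1 else 0)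
  else
    ∑ j ∈ Finset.Icc 1 (n - r),
      qNat r ^ j * Polynomial.X ^ j.choose 2 * ((n - r).choose j : Polynomial ℚ) * J (n - r) j
termination_by n
decreasing_by omega

/-! Write `S_r(m)` (`explicitSum r m`) for the sum on the right, so that the claim reads
`J_n^{(r)} = (n - r)! S_r(n - r)`.
A summand vanishes as soon as `v` has a gap (`v i = 0 < v (i + 1)`), because it then contains the
factor `[0]_q ^ v (i + 1) = 0`; a gap-free `v` whose entries sum to `m` is supported in `[0, m)`, so
`S_r(m)` is a finite sum. Splitting off the first entry `j = v 0` gives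
`S_r(m) = ∑_{j ≤ m} [r]_q^j q^{C(j,2)} / j! · S_j(m - j)`, where the term `j = 0` vanishes for
`m > 0` because `S_0(m) = δ_{m,0}`. Since `C(m, j) (m - j)! = m! / j!`, this is the recurrence
defining `J`. -/

open Polynomial Finset

@[to_additive]
theorem finprod_eq_mul_finprod_succ {M : Type*} [CommMonoid M] {f : ℕ → M}
    (hf : Function.HasFiniteMulSupport f) : ∏ᶠ i, f i = f 0 * ∏ᶠ i, f (i + 1) := by
  rw [← finprod_mem_univ, ← Nat.zero_union_range_succ, Set.singleton_union,
    finprod_mem_insert' f (by simp) (Set.Finite.subset hf Set.inter_subset_right),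
    finprod_mem_range Nat.succ_injective]

namespace Finsupp

def natTail (v : ℕ →₀ ℕ) : ℕ →₀ ℕ :=
  v.comapDomain Nat.succ Nat.succ_injective.injOn

def natCons (j : ℕ) (w : ℕ →₀ ℕ) : ℕ →₀ ℕ :=
  single 0 j + w.embDomain (addRightEmbedding 1)

@[simp] theorem natTail_apply (v : ℕ →₀ ℕ) (i : ℕ) : natTail v i = v (i + 1) := rfl

@[simp] theorem natCons_zero (j : ℕ) (w : ℕ →₀ ℕ) : natCons j w 0 = j := by
  have : 0 ∉ Set.range (addRightEmbedding 1) := by simp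
  simp [natCons, embDomain_of_notMem_range _ _ _ this]

@[simp] theorem natCons_succ (j : ℕ) (w : ℕ →₀ ℕ) (i : ℕ) : natCons j w (i + 1) = w i := by
  simpa [natCons] using embDomain_apply_self (addRightEmbedding 1) w i

@[simp] theorem natCons_natTail (v : ℕ →₀ ℕ) : natCons (v 0) (natTail v) = v := by
  ext (_ | i) <;> simp

@[simp] theorem natTail_natCons (j : ℕ) (w : ℕ →₀ ℕ) : natTail (natCons j w) = w := by
  ext i; simp

end Finsupp

open Finsupp

theorem mem_finsuppAntidiag_range_iff {M m : ℕ} {v : ℕ →₀ ℕ} :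
    v ∈ (range M).finsuppAntidiag m ↔ ∑ i ∈ range M, v i = m ∧ ∀ i, M ≤ i → v i = 0 := by
  simp only [mem_finsuppAntidiag, and_congr_right_iff]
  intro _
  refine ⟨fun h i hi => ?_, fun h i hi => ?_⟩
  · by_contra hv
    exact absurd (mem_range.1 (h (mem_support_iff.2 hv))) (by omega)
  · by_contra hv
    exact mem_support_iff.1 hi (h i (by simpa using hv))

theorem mem_finsuppAntidiag_range_succ_iff {M m : ℕ} {v : ℕ →₀ ℕ} :
    v ∈ (range (M + 1)).finsuppAntidiag m ↔
      v 0 ≤ m ∧ natTail v ∈ (range M).finsuppAntidiag (m - v 0) := by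
  simp only [mem_finsuppAntidiag_range_iff, sum_range_succ', natTail_apply]
  constructor
  · rintro ⟨hsum, hzero⟩
    exact ⟨by omega, by omega, fun i hi => hzero (i + 1) (by omega)⟩
  · rintro ⟨hle, hsum, hzero⟩
    refine ⟨by omega, fun i hi => ?_⟩
    obtain ⟨i, rfl⟩ : ∃ k, i = k + 1 := ⟨i - 1, by omega⟩
    exact hzero i (by omega)

theorem sum_finsuppAntidiag_range_succ {R : Type*} [AddCommMonoid R] (M m : ℕ)
    (f : (ℕ →₀ ℕ) → R) :
    ∑ v ∈ (range (M + 1)).finsuppAntidiag m, f v =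
      ∑ j ∈ range (m + 1), ∑ w ∈ (range M).finsuppAntidiag (m - j), f (natCons j w) := by
  rw [sum_sigma']
  refine sum_nbij' (fun v => ⟨v 0, natTail v⟩) (fun p => natCons p.1 p.2) ?_ ?_ ?_ ?_ ?_
  · intro v hv
    simpa [Nat.lt_succ_iff] using mem_finsuppAntidiag_range_succ_iff.1 hv
  · rintro ⟨j, w⟩ hp
    rw [mem_finsuppAntidiag_range_succ_iff]
    simpa [Nat.lt_succ_iff] using hp
  · intro v _; simp
  · rintro ⟨j, w⟩ _; simp
  · intro v _; simp

def GapFree (v : ℕ →₀ ℕ) : Prop := ∀ i, v i = 0 → v (i + 1) = 0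

theorem GapFree.ne_zero_of_le {v : ℕ →₀ ℕ} (hv : GapFree v) {i t : ℕ} (hit : i ≤ t)
    (ht : v t ≠ 0) : v i ≠ 0 := by
  induction t, hit using Nat.le_induction with
  | base => exact ht
  | succ t _ ih => exact ih fun h => ht (hv t h)

theorem GapFree.support_subset_range {v : ℕ →₀ ℕ} (hv : GapFree v) :
    v.support ⊆ range (∑ᶠ i, v i) := by
  intro t ht
  have hprefix : range (t + 1) ⊆ v.support := fun i hi =>
    mem_support_iff.2 (hv.ne_zero_of_le (Nat.lt_succ_iff.1 (mem_range.1 hi)) (mem_support_iff.1 ht))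
  rw [mem_range, finsum_eq_sum_of_support_subset _ (fun_support_eq v).subset]
  calc t < ∑ i ∈ range (t + 1), 1 := by simp
    _ ≤ ∑ i ∈ range (t + 1), v i :=
        sum_le_sum fun i hi => Nat.one_le_iff_ne_zero.2 (mem_support_iff.1 (hprefix hi))
    _ ≤ ∑ i ∈ v.support, v i := sum_le_sum_of_subset hprefix

theorem qNat_zero : qNat 0 = 0 := by simp [qNat]

def explicitTerm (r : ℕ) (v : ℕ →₀ ℕ) : ℚ[X] :=
  qNat r ^ v 0 * X ^ (∑ᶠ i, (v i).choose 2) *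
    ∏ᶠ i, (qNat (v i) ^ v (i + 1) * C (((v i).factorial : ℚ)⁻¹))

def explicitSum (r m : ℕ) : ℚ[X] :=
  ∑ᶠ v ∈ {v : ℕ →₀ ℕ | (∑ᶠ i, v i) = m}, explicitTerm r v

theorem hasFiniteMulSupport_explicitFactor (v : ℕ →₀ ℕ) :
    Function.HasFiniteMulSupport
      fun i => qNat (v i) ^ v (i + 1) * C (((v i).factorial : ℚ)⁻¹) := by
  refine Set.Finite.subset (Set.Finite.union v.hasFiniteSupport
    (v.hasFiniteSupport.comp_of_injective (add_left_injective 1))) ?_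
  intro i hi
  by_contra h
  simp only [Set.mem_union, Function.mem_support, Function.comp_apply, not_or, not_not] at h
  simp [h.1, h.2] at hi

@[simp] theorem explicitTerm_zero (r : ℕ) : explicitTerm r 0 = 1 := by
  simp [explicitTerm]

theorem explicitTerm_natCons (r j : ℕ) (w : ℕ →₀ ℕ) :
    explicitTerm r (natCons j w) =
      qNat r ^ j * X ^ j.choose 2 * C ((j.factorial : ℚ)⁻¹) * explicitTerm j w := by
  have hchoose : Function.HasFiniteSupport fun i => (natCons j w i).choose 2 :=
    Set.Finite.subset (natCons j w).hasFiniteSupport fun i hi h => hi (by simp_all)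
  rw [explicitTerm, explicitTerm, finsum_eq_add_finsum_succ hchoose,
    finprod_eq_mul_finprod_succ (hasFiniteMulSupport_explicitFactor _)]
  simp only [natCons_zero, natCons_succ, pow_add]
  ring

theorem gapFree_of_explicitTerm_ne_zero {r : ℕ} {v : ℕ →₀ ℕ} (h : explicitTerm r v ≠ 0) :
    GapFree v := by
  intro i h0
  by_contra h1
  refine h ?_
  rw [explicitTerm, finprod_eq_zero _ i (by simp [h0, qNat_zero, zero_pow h1])
    (hasFiniteMulSupport_explicitFactor v), mul_zero]

theorem explicitTerm_zero_left {v : ℕ →₀ ℕ} (hv : v ≠ 0) : explicitTerm 0 v = 0 := by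
  by_contra h
  obtain ⟨t, ht⟩ := Finsupp.ne_iff.1 hv
  have h0 : v 0 ≠ 0 := (gapFree_of_explicitTerm_ne_zero h).ne_zero_of_le (Nat.zero_le t) ht
  exact h (by rw [explicitTerm, qNat_zero, zero_pow h0, zero_mul, zero_mul])

theorem explicitSum_eq_sum (r : ℕ) {m M : ℕ} (hM : m ≤ M) :
    explicitSum r m = ∑ v ∈ (range M).finsuppAntidiag m, explicitTerm r v := by
  refine finsum_mem_eq_sum_of_inter_support_eq _ (Set.ext fun v => ?_)
  simp only [Set.mem_inter_iff, Set.mem_ofPred_eq, Function.mem_support, mem_coe,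
    mem_finsuppAntidiag]
  refine and_congr_left fun hne => ?_
  have hsupp := (gapFree_of_explicitTerm_ne_zero hne).support_subset_range
  constructor
  · rintro rfl
    have hsub := hsupp.trans (range_mono hM)
    refine ⟨(finsum_eq_sum_of_support_subset _ ?_).symm, hsub⟩
    exact (fun_support_eq v).trans_subset (mod_cast hsub)
  · rintro ⟨hsum, hsub⟩
    rwa [finsum_eq_sum_of_support_subset _ ((fun_support_eq v).trans_subset (mod_cast hsub))]

theorem explicitSum_zero_right (r : ℕ) : explicitSum r 0 = 1 := by
  simp [explicitSum_eq_sum r le_rfl]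

theorem explicitSum_zero_left (m : ℕ) : explicitSum 0 m = if m = 0 then 1 else 0 := by
  split_ifs with hm
  · rw [hm, explicitSum_zero_right]
  · refine (explicitSum_eq_sum 0 le_rfl).trans (sum_eq_zero fun v hv => explicitTerm_zero_left ?_)
    rintro rfl
    simp [eq_comm, hm] at hv

theorem explicitSum_eq_sum_range (r m : ℕ) :
    explicitSum r m = ∑ j ∈ range (m + 1),
      qNat r ^ j * X ^ j.choose 2 * C ((j.factorial : ℚ)⁻¹) * explicitSum j (m - j) := by
  rw [explicitSum_eq_sum r (Nat.le_succ m), sum_finsuppAntidiag_range_succ]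
  refine sum_congr rfl fun j _ => ?_
  rw [explicitSum_eq_sum j (M := m) (Nat.sub_le m j), Finset.mul_sum]
  exact sum_congr rfl fun w _ => explicitTerm_natCons r j w

theorem explicitSum_eq_sum_Icc (r : ℕ) {m : ℕ} (hm : m ≠ 0) :
    explicitSum r m = ∑ j ∈ Icc 1 m,
      qNat r ^ j * X ^ j.choose 2 * C ((j.factorial : ℚ)⁻¹) * explicitSum j (m - j) := by
  rw [explicitSum_eq_sum_range, range_eq_Ico, sum_eq_sum_Ico_succ_bot m.add_one_pos,
    Ico_add_one_right_eq_Icc]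
  simp [explicitSum_zero_left, hm]

theorem J_zero_right (n : ℕ) : J n 0 = if n = 0 then 1 else 0 := by
  rw [J, dif_pos rfl]

theorem J_self {r : ℕ} (hr : r ≠ 0) : J r r = 1 := by
  rw [J, dif_neg hr, dif_pos le_rfl, if_pos rfl]

theorem J_of_lt {n r : ℕ} (hr : r ≠ 0) (hrn : r < n) :
    J n r = ∑ j ∈ Icc 1 (n - r),
      qNat r ^ j * X ^ j.choose 2 * ((n - r).choose j : ℚ[X]) * J (n - r) j := by
  rw [J, dif_neg hr, dif_neg hrn.not_ge]

theorem cast_choose_mul_factorial_sub {m j : ℕ} (hj : j ≤ m) :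
    (m.choose j : ℚ[X]) * ((m - j).factorial : ℚ[X]) =
      (m.factorial : ℚ[X]) * C ((j.factorial : ℚ)⁻¹) := by
  have h : (m.choose j : ℚ) * (m - j).factorial = m.factorial * (j.factorial : ℚ)⁻¹ := by
    rw [Nat.cast_choose ℚ hj]
    field_simp
  simpa using congrArg C h

open Polynomial in
/-- for all `n ≥ r ≥ 0`,
`J_n^{(r)} = (n−r)! ∑_u [r]_q^{u_1} q^{∑_{i≥1} C(u_i,2)} ∏_{i≥1} [u_i]_q^{u_{i+1}}/u_i!`,
the sum being over all finitely supported sequences `u = (u_1, u_2, …)` of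
nonnegative integers with `∑_{i≥1} u_i = n − r` (the sequence `u` is encoded as
`v : ℕ →₀ ℕ` with `v i = u_{i+1}`).  All but finitely many summands, and all but
finitely many factors of each product, are trivial (`[0]_q^0 = 1`, `0! = 1`). -/
theorem J_explicit_formula_finsupp (n r : ℕ) (hrn : r ≤ n) :
    J n r =
      ((n - r).factorial : Polynomial ℚ) *
        ∑ᶠ v ∈ {v : ℕ →₀ ℕ | (∑ᶠ i, v i) = n - r},
          qNat r ^ v 0 * Polynomial.X ^ (∑ᶠ i, (v i).choose 2) *
            ∏ᶠ i, (qNat (v i) ^ v (i + 1) * Polynomial.C (((v i).factorial : ℚ)⁻¹)) := by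
  change J n r = ((n - r).factorial : ℚ[X]) * explicitSum r (n - r)
  induction n using Nat.strong_induction_on generalizing r with
  | _ n ih =>
  obtain rfl | hr := eq_or_ne r 0
  · rw [J_zero_right, Nat.sub_zero, explicitSum_zero_left]
    split_ifs with hn <;> simp [hn]
  obtain rfl | hlt := hrn.eq_or_lt
  · simp [J_self hr, explicitSum_zero_right]
  rw [J_of_lt hr hlt, explicitSum_eq_sum_Icc r (by omega), Finset.mul_sum]
  refine sum_congr rfl fun j hj => ?_
  rw [mem_Icc] at hj
  rw [ih (n - r) (by omega) j hj.2]
  linear_combination (qNat r ^ j * X ^ j.choose 2 * explicitSum j (n - r - j)) *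
    cast_choose_mul_factorial_sub hj.2
end
end

section
/- Let n ≥ 2 and 1 ≤ r ≤ n−1 be integers, let V = {1,…,n} and let R ⊆ V with |R| = r. Then for every ranking ρ on the subsets of V, J̄_n^{(r)}(q) = ∑_f q^{l̄_ρ(f)}, where the sum is over all maps f : V → V such that f(v) = v for all v ∈ R and every v ∈ V has some iterate f^k(v) ∈ R, and where l̄_ρ(f) = σ(û) + ∑_{v ∈ V∖R} (w_ρ(f(v)) − 1) with û = (u_0, u_1, …, u_k) the sequence of level sizes (u_0 = r, k the largest level) and σ(û) = ∑_{0 ≤ i, i+2 ≤ j ≤ k} u_i u_j. -/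
noncomputable section

/-- The reciprocal polynomial `J̄_n^{(r)}(q) = q^{C(n−1,2)−C(r−1,2)} J_n^{(r)}(1/q)`,
i.e. the reflection of `J_n^{(r)}` at degree `C(n−1,2) − C(r−1,2)`. -/
def Jbar (n r : ℕ) : Polynomial ℚ :=
  Polynomial.reflect ((n - 1).choose 2 - (r - 1).choose 2) (J n r)

/-- A rooted forest on the vertex set `Fin n` with root set `R`, encoded by the
map `f` sending each non-root to its parent and each root to itself: `f v = v`
for `v ∈ R`, and every vertex reaches `R` under iteration of `f`. -/
def IsForest {n : ℕ} (R : Finset (Fin n)) (f : Fin n → Fin n) : Prop :=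
  (∀ v ∈ R, f v = v) ∧ ∀ v, ∃ k, f^[k] v ∈ R

/-- The level `L(v)` of a vertex: the least `k ≥ 0` with `f^[k] v ∈ R`. -/
def level {n : ℕ} (R : Finset (Fin n)) (f : Fin n → Fin n) (v : Fin n) : ℕ :=
  sInf {k | f^[k] v ∈ R}

/-- `V_i`, the set of vertices at level `i`. -/
def levelSet {n : ℕ} (R : Finset (Fin n)) (f : Fin n → Fin n) (i : ℕ) : Finset (Fin n) :=
  Finset.univ.filter fun v => level R f v = i

/-- A ranking on the subsets of `Fin n`: a bijection `P ≃ {1, …, |P|}` for each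
subset `P` (here realized as an equivalence with `Fin P.card`). -/
def Ranking (n : ℕ) : Type :=
  ∀ P : Finset (Fin n), {v // v ∈ P} ≃ Fin P.card

/-- The weight `w_ρ(v) = ρ(V_{L(v)})(v) ∈ {1, …, |V_{L(v)}|}` of a vertex. -/
def weight {n : ℕ} (ρ : Ranking n) (R : Finset (Fin n)) (f : Fin n → Fin n) (v : Fin n) : ℕ :=
  (ρ (levelSet R f (level R f v))
    ⟨v, Finset.mem_filter.mpr ⟨Finset.mem_univ v, rfl⟩⟩ : Fin _) + 1

/-- `σ(û) = ∑_{0 ≤ i, i+2 ≤ j ≤ k} u_i u_j` where `u_i = |V_i|` and `k` is the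
largest level (as the levels of a forest on `n` vertices are `< n`, and
`u_j = 0` for `j` above the largest level, the sum may be taken over
`0 ≤ i, j ≤ n`). -/
def sigmaHat {n : ℕ} (R : Finset (Fin n)) (f : Fin n → Fin n) : ℕ :=
  ∑ i ∈ Finset.range (n + 1), ∑ j ∈ Finset.range (n + 1),
    if i + 2 ≤ j then (levelSet R f i).card * (levelSet R f j).card else 0

/-- The statistic `l̄_ρ(f) = σ(û) + ∑_{v ∉ R} (w_ρ(f(v)) − 1)`. -/
def levelStatBar {n : ℕ} (ρ : Ranking n) (R : Finset (Fin n)) (f : Fin n → Fin n) : ℕ :=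
  sigmaHat R f + ∑ v ∈ Finset.univ \ R, (weight ρ R f (f v) - 1)

-- degree bound target
def DD (n r : ℕ) : ℕ := (n - 1).choose 2 - (r - 1).choose 2

lemma twoQ (a : ℕ) : 2 * ((a.choose 2 : ℚ)) = a^2 - a := by
  induction a with
  | zero => simp
  | succ a ih =>
    rw [Nat.choose_succ_succ, Nat.choose_one_right]
    push_cast
    push_cast at ih
    nlinarith [ih]

lemma keyDD {n r j : ℕ} (hr : 1 ≤ r) (hrn : r < n) (hj : 1 ≤ j) (hjm : j ≤ n - r) :
    DD n r = (j * (r - 1) + (j.choose 2 + r * (n - r - j))) + DD (n - r) j := by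
  obtain ⟨a, rfl⟩ : ∃ a, r = a + 1 := ⟨r - 1, by omega⟩
  obtain ⟨b, rfl⟩ : ∃ b, j = b + 1 := ⟨j - 1, by omega⟩
  obtain ⟨t, rfl⟩ : ∃ t, n = (a + 1) + ((b + 1) + t) := ⟨n - a - b - 2, by omega⟩
  have e1 : (a + 1) + ((b + 1) + t) - 1 = a + b + t + 1 := by omega
  have e2 : a + 1 - 1 = a := by omega
  have e3 : (a + 1) + ((b + 1) + t) - (a + 1) = b + 1 + t := by omega
  have e4 : b + 1 + t - 1 = b + t := by omega
  have e5 : b + 1 - 1 = b := by omega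
  have e6 : b + 1 + t - (b + 1) = t := by omega
  rw [DD, DD, e1, e2, e3, e4, e5, e6]
  have m1 : Nat.choose a 2 ≤ Nat.choose (a + b + t + 1) 2 :=
    Nat.choose_le_choose 2 (by omega)
  have m2 : Nat.choose b 2 ≤ Nat.choose (b + t) 2 :=
    Nat.choose_le_choose 2 (by omega)
  qify [m1, m2]
  linear_combination (norm := (push_cast; ring_nf)) (twoQ (a+b+t+1) - twoQ a - twoQ (b+t) + twoQ b - twoQ (b+1)) / 2

lemma natDegree_qNat (r : ℕ) : (qNat r).natDegree ≤ r - 1 := by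
  unfold qNat
  refine Polynomial.natDegree_sum_le_of_forall_le _ _ fun i hi => ?_
  simp only [Polynomial.natDegree_X_pow]
  simp only [Finset.mem_range] at hi
  omega

lemma coeff_qNat (r i : ℕ) : (qNat r).coeff i = if i < r then 1 else 0 := by
  unfold qNat
  rw [Polynomial.finset_sum_coeff]
  simp [Polynomial.coeff_X_pow, Finset.sum_ite_eq]

lemma reflect_qNat {r : ℕ} (hr : 1 ≤ r) :
    Polynomial.reflect (r - 1) (qNat r) = qNat r := by
  ext i
  rw [Polynomial.coeff_reflect, coeff_qNat, coeff_qNat]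
  rcases le_or_gt i (r - 1) with h | h
  · rw [Polynomial.revAt_le h]
    have h1 : r - 1 - i < r := by omega
    have h2 : i < r := by omega
    simp [h1, h2]
  · rw [Polynomial.revAt_eq_self_of_lt h]

lemma reflect_qNat_pow {r : ℕ} (hr : 1 ≤ r) (j : ℕ) :
    Polynomial.reflect (j * (r - 1)) (qNat r ^ j) = qNat r ^ j := by
  induction j with
  | zero => simp
  | succ j ih =>
    have hb : (qNat r ^ j).natDegree ≤ j * (r - 1) :=
      le_trans (Polynomial.natDegree_pow_le) (by
        have := natDegree_qNat r; nlinarith)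
    have : (j + 1) * (r - 1) = j * (r - 1) + (r - 1) := by ring
    rw [this, pow_succ, Polynomial.reflect_mul _ _ hb (natDegree_qNat r), ih,
      reflect_qNat hr]

lemma natDegree_J (n : ℕ) : ∀ r, (J n r).natDegree ≤ DD n r := by
  induction n using Nat.strong_induction_on with
  | _ n IH =>
    intro r
    rw [J]
    split_ifs with h1 h2 h3 h4
    · simp
    · simp
    · simp
    · simp
    · refine Polynomial.natDegree_sum_le_of_forall_le _ _ fun j hj => ?_
      simp only [Finset.mem_Icc] at hj
      have hd : (qNat r ^ j * Polynomial.X ^ j.choose 2 * ((n - r).choose j : Polynomial ℚ)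
          * J (n - r) j).natDegree ≤ j * (r-1) + j.choose 2 + 0 + DD (n-r) j := by
        refine le_trans (Polynomial.natDegree_mul_le) ?_
        gcongr
        · refine le_trans (Polynomial.natDegree_mul_le) ?_
          gcongr
          · refine le_trans (Polynomial.natDegree_mul_le) ?_
            gcongr
            · exact le_trans (Polynomial.natDegree_pow_le)
                (by have := natDegree_qNat r; nlinarith)
            · simp
          · simp [Polynomial.natDegree_natCast]
        · exact IH (n - r) (by omega) j
      refine le_trans hd ?_
      rw [keyDD (by omega) (by omega) hj.1 hj.2]
      omega

lemma reflect_sum {ι : Type*} (N : ℕ) (s : Finset ι) (f : ι → Polynomial ℚ) :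
    Polynomial.reflect N (∑ i ∈ s, f i) = ∑ i ∈ s, Polynomial.reflect N (f i) := by
  induction s using Finset.cons_induction with
  | empty => simp
  | cons a s ha ih => rw [Finset.sum_cons, Finset.sum_cons, Polynomial.reflect_add, ih]

lemma Jbar_rec {n r : ℕ} (hr : 1 ≤ r) (hrn : r < n) :
    Jbar n r = ∑ j ∈ Finset.Icc 1 (n - r),
      qNat r ^ j * Polynomial.X ^ (r * (n - r - j)) * ((n - r).choose j : Polynomial ℚ)
        * Jbar (n - r) j := by
  rw [Jbar, J, dif_neg (by omega : ¬ r = 0), dif_neg (by omega : ¬ n ≤ r), reflect_sum]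
  refine Finset.sum_congr rfl fun j hj => ?_
  simp only [Finset.mem_Icc] at hj
  have hDD : (n - 1).choose 2 - (r - 1).choose 2
      = ((j * (r - 1)) + (j.choose 2 + r * (n - r - j))) + DD (n - r) j :=
    keyDD hr hrn hj.1 hj.2
  have hqd : (qNat r ^ j).natDegree ≤ j * (r - 1) :=
    le_trans Polynomial.natDegree_pow_le (by have := natDegree_qNat r; nlinarith)
  have hF : (qNat r ^ j * Polynomial.X ^ j.choose 2).natDegree
      ≤ (j * (r - 1)) + (j.choose 2 + r * (n - r - j)) := by
    refine le_trans Polynomial.natDegree_mul_le ?_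
    simp only [Polynomial.natDegree_X_pow]
    omega
  have hG : (Polynomial.C ((n - r).choose j : ℚ) * J (n - r) j).natDegree ≤ DD (n - r) j := by
    refine le_trans Polynomial.natDegree_mul_le ?_
    simp only [Polynomial.natDegree_C, zero_add]
    exact natDegree_J (n - r) j
  calc Polynomial.reflect ((n - 1).choose 2 - (r - 1).choose 2)
        (qNat r ^ j * Polynomial.X ^ j.choose 2 * ((n - r).choose j : Polynomial ℚ) * J (n - r) j)
      = Polynomial.reflect ((((j * (r - 1)) + (j.choose 2 + r * (n - r - j)))) + DD (n - r) j)
        ((qNat r ^ j * Polynomial.X ^ j.choose 2)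
          * (Polynomial.C ((n - r).choose j : ℚ) * J (n - r) j)) := by
        rw [← hDD, Polynomial.C_eq_natCast]; ring_nf
    _ = (qNat r ^ j * Polynomial.X ^ (r * (n - r - j)))
          * (Polynomial.C ((n - r).choose j : ℚ) * Jbar (n - r) j) := by
        rw [Polynomial.reflect_mul _ _ hF hG,
          Polynomial.reflect_mul _ _ hqd
            (le_of_eq (Polynomial.natDegree_X_pow _) |>.trans (Nat.le_add_right _ _)),
          reflect_qNat_pow hr, Polynomial.reflect_monomial,
          Polynomial.revAt_le (Nat.le_add_right _ _), Polynomial.reflect_C_mul]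
        have e : (j.choose 2 + r * (n - r - j)) - j.choose 2 = r * (n - r - j) := by omega
        simp only [e, Jbar, DD]
    _ = qNat r ^ j * Polynomial.X ^ (r * (n - r - j)) * ((n - r).choose j : Polynomial ℚ)
          * Jbar (n - r) j := by
        rw [Polynomial.C_eq_natCast]; ring

open scoped Classical
set_option linter.unusedSectionVars false

section Generic

variable {V : Type} [Fintype V] [DecidableEq V]

def GForest (R : Finset V) (f : V → V) : Prop :=
  (∀ v ∈ R, f v = v) ∧ ∀ v, ∃ k, f^[k] v ∈ R

def glevel (R : Finset V) (f : V → V) (v : V) : ℕ := sInf {k | f^[k] v ∈ R}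

def glevelSet (R : Finset V) (f : V → V) (i : ℕ) : Finset V :=
  Finset.univ.filter fun v => glevel R f v = i

def GRanking (V : Type) : Type :=
  ∀ P : Finset V, {v // v ∈ P} ≃ Fin P.card

def gweight (ρ : GRanking V) (R : Finset V) (f : V → V) (v : V) : ℕ :=
  (ρ (glevelSet R f (glevel R f v))
    ⟨v, Finset.mem_filter.mpr ⟨Finset.mem_univ v, rfl⟩⟩ : Fin _) + 1

def gsigma (R : Finset V) (f : V → V) : ℕ :=
  ∑ i ∈ Finset.range (Fintype.card V + 1), ∑ j ∈ Finset.range (Fintype.card V + 1),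
    if i + 2 ≤ j then (glevelSet R f i).card * (glevelSet R f j).card else 0

def glbar (ρ : GRanking V) (R : Finset V) (f : V → V) : ℕ :=
  gsigma R f + ∑ v ∈ Finset.univ \ R, (gweight ρ R f (f v) - 1)

variable {R : Finset V} {f : V → V}

lemma glevel_spec (hf : GForest R f) (v : V) : f^[glevel R f v] v ∈ R :=
  Nat.sInf_mem (hf.2 v)

lemma glevel_eq_zero (hf : GForest R f) {v : V} : glevel R f v = 0 ↔ v ∈ R := by
  constructor
  · intro h
    have := glevel_spec hf v
    rwa [h, Function.iterate_zero_apply] at this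
  · intro h
    exact Nat.sInf_eq_zero.mpr (Or.inl (by simpa using h))

lemma glevel_f (hf : GForest R f) {v : V} (hv : v ∉ R) :
    glevel R f (f v) + 1 = glevel R f v := by
  have hL : 1 ≤ glevel R f v := by
    rcases Nat.eq_zero_or_pos (glevel R f v) with h | h
    · exact absurd ((glevel_eq_zero hf).mp h) hv
    · exact h
  have h1 : glevel R f (f v) ≤ glevel R f v - 1 := by
    apply Nat.sInf_le
    show f^[glevel R f v - 1] (f v) ∈ R
    rw [← Function.iterate_succ_apply]
    have h3 : (glevel R f v - 1).succ = glevel R f v := by omega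
    rw [h3]
    exact glevel_spec hf v
  have h2 : glevel R f v ≤ glevel R f (f v) + 1 := by
    apply Nat.sInf_le
    show f^[glevel R f (f v) + 1] v ∈ R
    rw [Function.iterate_succ_apply]
    exact glevel_spec hf (f v)
  omega

lemma glevel_iterate (hf : GForest R f) (v : V) :
    ∀ i, i ≤ glevel R f v → glevel R f (f^[i] v) = glevel R f v - i := by
  intro i
  induction i with
  | zero => simp
  | succ i ih =>
    intro hi
    have hi' : i ≤ glevel R f v := by omega
    have h1 : glevel R f (f^[i] v) = glevel R f v - i := ih hi'
    have hnot : f^[i] v ∉ R := by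
      intro hmem
      have := (glevel_eq_zero hf).mpr hmem
      omega
    have := glevel_f hf hnot
    rw [h1] at this
    rw [Function.iterate_succ_apply']
    omega

lemma glevel_lt_card (hf : GForest R f) (v : V) : glevel R f v < Fintype.card V := by
  have hinj : Function.Injective (fun i : Fin (glevel R f v + 1) => f^[(i : ℕ)] v) := by
    intro i j hij
    have hi := glevel_iterate hf v i (by omega)
    have hj := glevel_iterate hf v j (by omega)
    simp only at hij
    rw [hij] at hi
    have : (i : ℕ) = j := by omega
    exact Fin.ext this
  have := Fintype.card_le_of_injective _ hinj
  simpa using this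

lemma glevelSet_zero (hf : GForest R f) : glevelSet R f 0 = R := by
  ext v
  simp [glevelSet, glevel_eq_zero hf]

lemma glevelSet_card_sum (hf : GForest R f) {m : ℕ} (hm : Fintype.card V ≤ m) :
    ∑ i ∈ Finset.range (m + 1), (glevelSet R f i).card = Fintype.card V := by
  rw [← Finset.card_univ, Finset.card_eq_sum_card_fiberwise
    (f := glevel R f) (t := Finset.range (m + 1))
    (fun v _ => Finset.mem_range.mpr (by have := glevel_lt_card hf v; omega))]
  rfl

end Generic

section Sub

variable {V : Type} [Fintype V] [DecidableEq V]

def sub (R : Finset V) (f : V → V) :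
    {v : V // v ∈ Finset.univ \ R} → {v : V // v ∈ Finset.univ \ R} :=
  fun v => if h : f ↑v ∈ R then v else ⟨f ↑v, by simp [h]⟩

def subRoots (R : Finset V) (f : V → V) : Finset {v : V // v ∈ Finset.univ \ R} :=
  Finset.univ.filter fun v => f ↑v ∈ R

variable {R : Finset V} {f : V → V}

lemma sub_coe {v : {v : V // v ∈ Finset.univ \ R}} (h : f ↑v ∉ R) :
    ↑(sub R f v) = f ↑v := by simp [sub, h]

lemma subq_eq_self {v : {v : V // v ∈ Finset.univ \ R}} (h : f ↑v ∈ R) :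
    sub R f v = v := by simp [sub, h]

lemma mem_subRoots {v : {v : V // v ∈ Finset.univ \ R}} :
    v ∈ subRoots R f ↔ f ↑v ∈ R := by simp [subRoots]

lemma coe_not_mem (v : {v : V // v ∈ Finset.univ \ R}) : (↑v : V) ∉ R := by
  have := v.2; simp only [Finset.mem_sdiff] at this; exact this.2

lemma glevel_coe_pos (hf : GForest R f) (v : {v : V // v ∈ Finset.univ \ R}) :
    1 ≤ glevel R f ↑v := by
  rcases Nat.eq_zero_or_pos (glevel R f ↑v) with h | h
  · exact absurd ((glevel_eq_zero hf).mp h) (coe_not_mem v)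
  · exact h

lemma sub_iterate (hf : GForest R f) (v : {v : V // v ∈ Finset.univ \ R}) :
    ∀ k, k + 1 ≤ glevel R f ↑v → ↑((sub R f)^[k] v) = f^[k] (↑v : V) := by
  intro k
  induction k with
  | zero => simp
  | succ k ih =>
    intro hk
    have hco : ↑((sub R f)^[k] v) = f^[k] (↑v : V) := ih (by omega)
    have hlev : glevel R f (f^[k] (↑v : V)) = glevel R f ↑v - k :=
      glevel_iterate hf _ k (by omega)
    have hnot : f (f^[k] (↑v : V)) ∉ R := by
      intro hmem
      have h0 := (glevel_eq_zero hf).mpr hmem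
      have hnr : f^[k] (↑v : V) ∉ R := by
        intro hm; have := (glevel_eq_zero hf).mpr hm; omega
      have := glevel_f hf hnr
      omega
    rw [Function.iterate_succ_apply', Function.iterate_succ_apply']
    rw [← hco] at hnot ⊢
    rw [sub_coe hnot, hco]

lemma subforest (hf : GForest R f) : GForest (subRoots R f) (sub R f) := by
  constructor
  · intro v hv
    exact subq_eq_self (mem_subRoots.mp hv)
  · intro v
    have hL := glevel_coe_pos hf v
    refine ⟨glevel R f ↑v - 1, ?_⟩
    rw [mem_subRoots]
    have hco : ↑((sub R f)^[glevel R f ↑v - 1] v) = f^[glevel R f ↑v - 1] (↑v : V) :=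
      sub_iterate hf v _ (by omega)
    rw [hco]
    have h1 : glevel R f (f^[glevel R f ↑v - 1] (↑v : V)) = 1 := by
      rw [glevel_iterate hf _ _ (by omega)]; omega
    have hnr : f^[glevel R f ↑v - 1] (↑v : V) ∉ R := by
      intro hm; have := (glevel_eq_zero hf).mpr hm; omega
    have := glevel_f hf hnr
    exact (glevel_eq_zero hf).mp (by omega)

lemma glevel_sub (hf : GForest R f) (v : {v : V // v ∈ Finset.univ \ R}) :
    glevel (subRoots R f) (sub R f) v + 1 = glevel R f ↑v := by
  have hf' := subforest hf
  generalize hgen : glevel R f ↑v = L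
  induction L using Nat.strong_induction_on generalizing v with
  | _ L IH =>
    have hL : 1 ≤ L := hgen ▸ glevel_coe_pos hf v
    rcases eq_or_lt_of_le hL with h1 | h2
    · have hv : v ∈ subRoots R f := by
        rw [mem_subRoots]
        have := glevel_f hf (coe_not_mem v)
        exact (glevel_eq_zero hf).mp (by omega)
      rw [(glevel_eq_zero hf').mpr hv]
      omega
    · have hfv : f ↑v ∉ R := by
        intro hm
        have := (glevel_eq_zero hf).mpr hm
        have := glevel_f hf (coe_not_mem v)
        omega
      have hv : v ∉ subRoots R f := by rw [mem_subRoots]; exact hfv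
      have hsc : ↑(sub R f v) = f ↑v := sub_coe hfv
      have hlev2 : glevel R f ↑(sub R f v) = L - 1 := by
        rw [hsc]
        have := glevel_f hf (coe_not_mem v)
        omega
      have hIH := IH (L - 1) (by omega) (sub R f v) hlev2
      have hstep : glevel (subRoots R f) (sub R f) (sub R f v) + 1
          = glevel (subRoots R f) (sub R f) v :=
        glevel_f hf' hv
      omega

lemma glevelSet_sub (hf : GForest R f) (i : ℕ) :
    (glevelSet (subRoots R f) (sub R f) i).map (Function.Embedding.subtype _)
      = glevelSet R f (i + 1) := by
  ext v
  simp only [Finset.mem_map, glevelSet, Finset.mem_filter, Finset.mem_univ, true_and,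
    Function.Embedding.coe_subtype]
  constructor
  · rintro ⟨w, hw, rfl⟩
    have := glevel_sub hf w
    omega
  · intro hv
    have hvR : v ∉ R := by
      intro hm; have := (glevel_eq_zero hf).mpr hm; omega
    refine ⟨⟨v, by simp [hvR]⟩, ?_, rfl⟩
    have h : glevel (subRoots R f) (sub R f) ⟨v, by simp [hvR]⟩ + 1 = glevel R f v :=
      glevel_sub hf _
    omega

lemma card_glevelSet_sub (hf : GForest R f) (i : ℕ) :
    (glevelSet (subRoots R f) (sub R f) i).card = (glevelSet R f (i + 1)).card := by
  rw [← glevelSet_sub hf i, Finset.card_map]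

end Sub

section Rank

variable {V : Type} [Fintype V] [DecidableEq V]

lemma glevelSet_empty {R : Finset V} {f : V → V} (hf : GForest R f) {j : ℕ}
    (hj : Fintype.card V ≤ j) : glevelSet R f j = ∅ := by
  ext v
  simp only [glevelSet, Finset.mem_filter, Finset.mem_univ, true_and, Finset.notMem_empty,
    iff_false]
  intro h
  have := glevel_lt_card hf v
  omega

def subMapEquiv {R : Finset V} (P : Finset {v : V // v ∈ Finset.univ \ R}) :
    {w // w ∈ P} ≃ {v : V // v ∈ P.map (Function.Embedding.subtype _)} where
  toFun w := ⟨↑↑w, Finset.mem_map_of_mem _ w.2⟩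
  invFun v :=
    ⟨⟨↑v, by obtain ⟨a, ha, h⟩ := Finset.mem_map.mp v.2; rw [← h]; exact a.2⟩, by
      obtain ⟨a, ha, h⟩ := Finset.mem_map.mp v.2
      have ha2 : a = ⟨↑v, by rw [← h]; exact a.2⟩ := Subtype.ext h
      rw [← ha2]; exact ha⟩
  left_inv w := Subtype.ext (Subtype.ext rfl)
  right_inv v := Subtype.ext rfl

def subRanking (ρ : GRanking V) (R : Finset V) : GRanking {v : V // v ∈ Finset.univ \ R} :=
  fun P => (subMapEquiv P).trans ((ρ (P.map (Function.Embedding.subtype _))).trans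
    (finCongr (Finset.card_map _)))

lemma rho_congr (ρ : GRanking V) {P Q : Finset V} (h : P = Q) (v : V) (hv : v ∈ P)
    (hv' : v ∈ Q) : ((ρ P ⟨v, hv⟩ : Fin _) : ℕ) = ((ρ Q ⟨v, hv'⟩ : Fin _) : ℕ) := by
  subst h; rfl

variable {R : Finset V} {f : V → V}

lemma gweight_sub (hf : GForest R f) (ρ : GRanking V) (w : {v : V // v ∈ Finset.univ \ R}) :
    gweight (subRanking ρ R) (subRoots R f) (sub R f) w = gweight ρ R f ↑w := by
  have h1 : glevel (subRoots R f) (sub R f) w + 1 = glevel R f ↑w := glevel_sub hf w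
  have h2 : (glevelSet (subRoots R f) (sub R f) (glevel (subRoots R f) (sub R f) w)).map
      (Function.Embedding.subtype _) = glevelSet R f (glevel R f ↑w) := by
    rw [glevelSet_sub hf, h1]
  simp only [gweight, subRanking, Equiv.trans_apply, finCongr_apply, Fin.coe_cast, subMapEquiv,
    Equiv.coe_fn_mk]
  congr 1
  exact rho_congr ρ h2 ↑w _ _

lemma gweight_root (hf : GForest R f) (ρ : GRanking V) {v : V} (hv : v ∈ R) :
    gweight ρ R f v = ((ρ R ⟨v, hv⟩ : Fin _) : ℕ) + 1 := by
  have h0 : glevel R f v = 0 := (glevel_eq_zero hf).mpr hv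
  unfold gweight
  congr 1
  exact rho_congr ρ (by rw [h0, glevelSet_zero hf]) v _ _

lemma sigma_arith (u : ℕ → ℕ) (n r s : ℕ) (hr : 1 ≤ r) (hlt : r < n)
    (hu0 : u 0 = r) (hu1 : u 1 = s) (husum : ∑ i ∈ Finset.range (n+1), u i = n)
    (huz : ∀ j, n - r ≤ j → u (j+1) = 0) :
    ∑ i ∈ Finset.range (n+1), ∑ j ∈ Finset.range (n+1), (if i+2 ≤ j then u i * u j else 0)
      = r * (n - r - s)
        + ∑ i ∈ Finset.range (n - r + 1), ∑ j ∈ Finset.range (n - r + 1),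
            (if i+2 ≤ j then u (i+1) * u (j+1) else 0) := by
  obtain ⟨m, rfl⟩ : ∃ m, n = m + 2 := ⟨n - 2, by omega⟩
  rw [Finset.sum_range_succ' (fun i => ∑ j ∈ Finset.range (m+2+1),
    (if i+2 ≤ j then u i * u j else 0)) (m+2)]
  have hzero : ∑ j ∈ Finset.range (m+2+1), (if 0+2 ≤ j then u 0 * u j else 0)
      = r * (m + 2 - r - s) := by
    have e1 : ∀ j, (if 0+2 ≤ j then u 0 * u j else 0) = r * (if 2 ≤ j then u j else 0) := by
      intro j; split_ifs with h <;> simp_all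
    simp only [e1]
    rw [← Finset.mul_sum]
    congr 1
    have expand : ∑ j ∈ Finset.range (m+2+1), u j
        = (∑ j ∈ Finset.range (m+1), u (j+2)) + u 1 + u 0 := by
      rw [Finset.sum_range_succ' u (m+2), Finset.sum_range_succ' (fun j => u (j+1)) (m+1)]
    have expand2 : ∑ j ∈ Finset.range (m+2+1), (if 2 ≤ j then u j else 0)
        = ∑ j ∈ Finset.range (m+1), u (j+2) := by
      rw [Finset.sum_range_succ' (fun j => if 2 ≤ j then u j else 0) (m+2),
        Finset.sum_range_succ' (fun j => if 2 ≤ j + 1 then u (j+1) else 0) (m+1)]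
      simp only [show ¬ (2 ≤ 0) by omega, show ¬ (2 ≤ 0 + 1) by omega, if_false, add_zero]
      refine Finset.sum_congr rfl fun j hj => ?_
      simp [show 2 ≤ j + 1 + 1 by omega]
    rw [expand2]
    rw [expand] at husum
    omega
  rw [hzero, add_comm]
  congr 1
  have inner : ∀ i, ∑ j ∈ Finset.range (m+2+1), (if (i+1)+2 ≤ j then u (i+1) * u j else 0)
      = ∑ j ∈ Finset.range (m+2), (if i+2 ≤ j then u (i+1) * u (j+1) else 0) := by
    intro i
    rw [Finset.sum_range_succ' (fun j => if (i+1)+2 ≤ j then u (i+1) * u j else 0) (m+2)]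
    simp only [show ¬ ((i+1)+2 ≤ 0) by omega, if_false, add_zero]
    refine Finset.sum_congr rfl fun j hj => ?_
    congr 1
    simp only [eq_iff_iff]
    omega
  simp only [inner]
  have hsub : Finset.range (m + 2 - r + 1) ⊆ Finset.range (m+2) :=
    Finset.range_subset_range.mpr (by omega)
  rw [← Finset.sum_subset hsub (by
    intro i hi hi2
    simp only [Finset.mem_range, not_lt] at hi2
    refine Finset.sum_eq_zero fun j hj => ?_
    rw [huz i (by omega)]
    simp)]
  refine Finset.sum_congr rfl fun i hi => ?_
  rw [← Finset.sum_subset hsub (by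
    intro j hj hj2
    simp only [Finset.mem_range, not_lt] at hj2
    rw [huz j (by omega)]
    simp)]

lemma cardW {R : Finset V} {inst : Fintype {v : V // v ∈ Finset.univ \ R}} :
    @Fintype.card _ inst = Fintype.card V - R.card := by
  have h1 : @Fintype.card _ inst = Fintype.card {v : V // v ∈ Finset.univ \ R} :=
    Fintype.card_congr (Equiv.refl _)
  rw [h1, Fintype.card_of_subtype (Finset.univ \ R) (fun x => Iff.rfl),
    Finset.card_sdiff_of_subset (Finset.subset_univ R), Finset.card_univ]

lemma gsigma_decomp {R : Finset V} {f : V → V} (hf : GForest R f) (hr : 1 ≤ R.card)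
    (hlt : R.card < Fintype.card V) :
    gsigma R f = R.card * (Fintype.card V - R.card - (glevelSet R f 1).card)
      + gsigma (subRoots R f) (sub R f) := by
  have hf' := subforest hf
  have huz : ∀ j, Fintype.card V - R.card ≤ j → (glevelSet R f (j+1)).card = 0 := by
    intro j hj
    have h := glevelSet_empty hf' (j := j) (by rw [cardW]; omega)
    have h2 := card_glevelSet_sub hf j
    rw [h] at h2
    simpa using h2.symm
  have key := sigma_arith (fun i => (glevelSet R f i).card) (Fintype.card V) R.card
    (glevelSet R f 1).card hr hlt (by simp [glevelSet_zero hf]) rfl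
    (glevelSet_card_sum hf le_rfl) huz
  unfold gsigma
  simp only [cardW]
  rw [key]
  congr 1
  refine Finset.sum_congr rfl fun i hi => Finset.sum_congr rfl fun j hj => ?_
  rw [card_glevelSet_sub hf, card_glevelSet_sub hf]

end Rank

section Decomp

variable {V : Type} [Fintype V] [DecidableEq V] {R : Finset V} {f : V → V}

lemma glevelSet_one_subset (hf : GForest R f) : glevelSet R f 1 ⊆ Finset.univ \ R := by
  intro v hv
  simp only [glevelSet, Finset.mem_filter, Finset.mem_univ, true_and] at hv
  simp only [Finset.mem_sdiff, Finset.mem_univ, true_and]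
  intro hm
  have := (glevel_eq_zero hf).mpr hm
  omega

lemma glevel_eq_one_iff (hf : GForest R f) {v : V} (hv : v ∉ R) :
    glevel R f v = 1 ↔ f v ∈ R := by
  have h := glevel_f hf hv
  rw [← glevel_eq_zero hf (v := f v)]
  omega

lemma glbar_decomp (hf : GForest R f) (ρ : GRanking V) (hr : 1 ≤ R.card)
    (hlt : R.card < Fintype.card V) :
    glbar ρ R f = R.card * (Fintype.card V - R.card - (glevelSet R f 1).card)
      + (∑ v ∈ glevelSet R f 1, (gweight ρ R f (f v) - 1))
      + glbar (subRanking ρ R) (subRoots R f) (sub R f) := by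
  have hf' := subforest hf
  have hSsub := glevelSet_one_subset hf
  have hsplit : ∑ v ∈ Finset.univ \ R, (gweight ρ R f (f v) - 1)
      = ∑ v ∈ (Finset.univ \ R) \ glevelSet R f 1, (gweight ρ R f (f v) - 1)
        + ∑ v ∈ glevelSet R f 1, (gweight ρ R f (f v) - 1) :=
    (Finset.sum_sdiff hSsub).symm
  have hmap : (Finset.univ \ subRoots R f).map
      (Function.Embedding.subtype (fun v => v ∈ Finset.univ \ R))
      = (Finset.univ \ R) \ glevelSet R f 1 := by
    ext x
    simp only [Finset.mem_map, Function.Embedding.coe_subtype]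
    constructor
    · rintro ⟨w, hw, rfl⟩
      rw [Finset.mem_sdiff] at hw
      rw [Finset.mem_sdiff]
      refine ⟨w.2, fun hx1 => ?_⟩
      have h1 : glevel R f ↑w = 1 := by
        simp only [glevelSet, Finset.mem_filter] at hx1; exact hx1.2
      exact hw.2 (mem_subRoots.mpr ((glevel_eq_one_iff hf (coe_not_mem w)).mp h1))
    · intro hx
      rw [Finset.mem_sdiff] at hx
      obtain ⟨hxW, hx1⟩ := hx
      have hxR : x ∉ R := by rw [Finset.mem_sdiff] at hxW; exact hxW.2
      refine ⟨⟨x, hxW⟩, ?_, rfl⟩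
      rw [Finset.mem_sdiff]
      refine ⟨Finset.mem_univ _, fun hm => ?_⟩
      rw [mem_subRoots] at hm
      exact hx1 (by
        simp only [glevelSet, Finset.mem_filter]
        exact ⟨Finset.mem_univ _, (glevel_eq_one_iff hf hxR).mpr hm⟩)
  have hsum2 : ∑ v ∈ (Finset.univ \ R) \ glevelSet R f 1, (gweight ρ R f (f v) - 1)
      = ∑ w ∈ Finset.univ \ subRoots R f,
          (gweight (subRanking ρ R) (subRoots R f) (sub R f) (sub R f w) - 1) := by
    rw [← hmap, Finset.sum_map]
    refine Finset.sum_congr rfl fun w hw => ?_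
    simp only [Finset.mem_sdiff, Finset.mem_univ, true_and] at hw
    rw [mem_subRoots] at hw
    have h1 : ↑(sub R f w) = f ↑w := sub_coe hw
    rw [gweight_sub hf ρ (sub R f w), h1]
    rfl
  have hsig := gsigma_decomp hf hr hlt
  unfold glbar
  rw [hsplit, hsum2, hsig]
  ring
end Decomp

section Psi

variable {V : Type} [Fintype V] [DecidableEq V]

def liftSet (R S : Finset V) : Finset {v : V // v ∈ Finset.univ \ R} :=
  Finset.univ.filter fun w => ↑w ∈ S

def psi (R S : Finset V) (g : {v // v ∈ S} → {v // v ∈ R})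
    (f' : {v : V // v ∈ Finset.univ \ R} → {v : V // v ∈ Finset.univ \ R}) : V → V :=
  fun v =>
    if hv : v ∈ R then v
    else if hs : v ∈ S then ↑(g ⟨v, hs⟩)
    else ↑(f' ⟨v, by simp [hv]⟩)

variable {R S : Finset V} {g : {v // v ∈ S} → {v // v ∈ R}}
  {f' : {v : V // v ∈ Finset.univ \ R} → {v : V // v ∈ Finset.univ \ R}}

lemma mem_liftSet {w : {v : V // v ∈ Finset.univ \ R}} : w ∈ liftSet R S ↔ ↑w ∈ S := by
  simp [liftSet]

lemma psi_root {v : V} (hv : v ∈ R) : psi R S g f' v = v := by simp [psi, hv]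

lemma psi_S (hS : S ⊆ Finset.univ \ R) {v : V} (hv : v ∈ S) :
    psi R S g f' v = ↑(g ⟨v, hv⟩) := by
  have hvR : v ∉ R := by have := hS hv; simp only [Finset.mem_sdiff] at this; exact this.2
  simp [psi, hvR, hv]

lemma psi_other {v : V} (hvR : v ∉ R) (hvS : v ∉ S) :
    psi R S g f' v = ↑(f' ⟨v, by simp [hvR]⟩) := by simp [psi, hvR, hvS]

lemma psi_forest (hS : S ⊆ Finset.univ \ R) (hf' : GForest (liftSet R S) f') :
    GForest R (psi R S g f') := by
  refine ⟨fun v hv => psi_root hv, ?_⟩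
  intro v
  by_cases hvR : v ∈ R
  · exact ⟨0, by simpa using hvR⟩
  · -- strong induction on glevel of ⟨v, _⟩ w.r.t. f'
    have main : ∀ L (v : V) (hvR : v ∉ R),
        glevel (liftSet R S) f' ⟨v, by simp [hvR]⟩ = L → ∃ k, (psi R S g f')^[k] v ∈ R := by
      intro L
      induction L using Nat.strong_induction_on with
      | _ L IH =>
        intro v hvR hL
        by_cases hvS : v ∈ S
        · refine ⟨1, ?_⟩
          rw [Function.iterate_one, psi_S hS hvS]
          exact (g ⟨v, hvS⟩).2
        · have hw : (⟨v, by simp [hvR]⟩ : {v : V // v ∈ Finset.univ \ R}) ∉ liftSet R S := by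
            rw [mem_liftSet]; exact hvS
          have hstep := glevel_f hf' hw
          have hfR : (↑(f' ⟨v, by simp [hvR]⟩) : V) ∉ R := coe_not_mem _
          have hco : (⟨↑(f' ⟨v, by simp [hvR]⟩), by simp [hfR]⟩ :
              {v : V // v ∈ Finset.univ \ R}) = f' ⟨v, by simp [hvR]⟩ := Subtype.ext rfl
          have hlev2 : glevel (liftSet R S) f'
              ⟨↑(f' ⟨v, by simp [hvR]⟩), by simp [hfR]⟩ = L - 1 := by
            rw [hco]; omega
          have hLpos : 1 ≤ L := by
            rcases Nat.eq_zero_or_pos L with h0 | h1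
            · rw [h0] at hL
              have := (glevel_eq_zero hf').mp hL
              rw [mem_liftSet] at this
              exact absurd this hvS
            · exact h1
          obtain ⟨k, hk⟩ := IH (L - 1) (by omega) _ hfR hlev2
          refine ⟨k + 1, ?_⟩
          rw [Function.iterate_succ_apply, psi_other hvR hvS]
          exact hk
    exact main _ v hvR rfl

lemma psi_glevelSet_one (hS : S ⊆ Finset.univ \ R) (hf' : GForest (liftSet R S) f') :
    glevelSet R (psi R S g f') 1 = S := by
  have hforest := psi_forest (g := g) hS hf'
  ext v
  simp only [glevelSet, Finset.mem_filter, Finset.mem_univ, true_and]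
  by_cases hvR : v ∈ R
  · have h0 : glevel R (psi R S g f') v = 0 := (glevel_eq_zero hforest).mpr hvR
    rw [h0]
    constructor
    · intro h; exact absurd h (by omega)
    · intro hv
      have h2 := hS hv
      rw [Finset.mem_sdiff] at h2
      exact absurd hvR h2.2
  · rw [glevel_eq_one_iff hforest hvR]
    constructor
    · intro h
      by_contra hvS
      rw [psi_other hvR hvS] at h
      exact coe_not_mem _ h
    · intro hv
      rw [psi_S hS hv]
      exact (g ⟨v, hv⟩).2

lemma psi_sub (hS : S ⊆ Finset.univ \ R) (hf' : GForest (liftSet R S) f') :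
    sub R (psi R S g f') = f' := by
  funext w
  have hwR : (↑w : V) ∉ R := coe_not_mem w
  by_cases hwS : (↑w : V) ∈ S
  · have h1 : psi R S g f' ↑w ∈ R := by rw [psi_S hS hwS]; exact (g ⟨↑w, hwS⟩).2
    rw [subq_eq_self h1]
    exact (hf'.1 w (mem_liftSet.mpr hwS)).symm
  · have h1 : psi R S g f' ↑w = ↑(f' ⟨↑w, by simp [hwR]⟩) := psi_other hwR hwS
    have h2 : psi R S g f' ↑w ∉ R := by rw [h1]; exact coe_not_mem _
    apply Subtype.ext
    rw [sub_coe h2, h1]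

lemma psi_retract {f : V → V} (hf : GForest R f) (hS : glevelSet R f 1 = S)
    (gg : {v // v ∈ S} → {v // v ∈ R})
    (hgg : ∀ v : {v // v ∈ S}, ↑(gg v) = f ↑v) :
    psi R S gg (sub R f) = f := by
  have hSsub : S ⊆ Finset.univ \ R := by rw [← hS]; exact glevelSet_one_subset hf
  funext v
  by_cases hvR : v ∈ R
  · rw [psi_root hvR]
    exact (hf.1 v hvR).symm
  · by_cases hvS : v ∈ S
    · rw [psi_S hSsub hvS]
      exact hgg ⟨v, hvS⟩
    · have hlev : glevel R f v ≠ 1 := by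
        intro h
        apply hvS
        rw [← hS]
        simp only [glevelSet, Finset.mem_filter, Finset.mem_univ, true_and]
        exact h
      have hfvR : f v ∉ R := by
        intro hm
        exact hlev ((glevel_eq_one_iff hf hvR).mpr hm)
      rw [psi_other hvR hvS]
      exact sub_coe hfvR

lemma psi_g_retract (hS : S ⊆ Finset.univ \ R)
    (hmem : ∀ v : {v // v ∈ S}, psi R S g f' ↑v ∈ R) :
    (fun v : {v // v ∈ S} => (⟨psi R S g f' ↑v, hmem v⟩ : {v // v ∈ R})) = g := by
  funext v
  apply Subtype.ext
  show psi R S g f' ↑v = ↑(g v)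
  rw [psi_S hS v.2]

lemma subRoots_eq_liftSet {f : V → V} (hf : GForest R f) (hS : glevelSet R f 1 = S) :
    subRoots R f = liftSet R S := by
  ext w
  rw [mem_subRoots, mem_liftSet, ← glevel_eq_one_iff hf (coe_not_mem w), ← hS]
  simp [glevelSet]

end Psi

section Main

variable {V : Type} [Fintype V] [DecidableEq V]

lemma cardS {S : Finset V} {inst : Fintype {v : V // v ∈ S}} :
    @Fintype.card _ inst = S.card := by
  have h1 : @Fintype.card _ inst = Fintype.card {v : V // v ∈ S} :=
    Fintype.card_congr (Equiv.refl _)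
  rw [h1, Fintype.card_of_subtype S (fun x => Iff.rfl)]

lemma sum_ranks (ρ : GRanking V) (R S : Finset V) :
    ∑ g ∈ (Finset.univ : Finset ({v // v ∈ S} → {v // v ∈ R})),
      (Polynomial.X : Polynomial ℚ) ^ (∑ v ∈ S.attach, ((ρ R (g v) : Fin _) : ℕ))
      = qNat R.card ^ S.card := by
  have h1 : ∀ g : {v // v ∈ S} → {v // v ∈ R},
      (Polynomial.X : Polynomial ℚ) ^ (∑ v ∈ S.attach, ((ρ R (g v) : Fin _) : ℕ))
        = ∏ v ∈ S.attach, Polynomial.X ^ ((ρ R (g v) : Fin _) : ℕ) :=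
    fun g => (Finset.prod_pow_eq_pow_sum _ _ _).symm
  rw [Finset.sum_congr rfl (fun g _ => h1 g)]
  simp only [Finset.attach_eq_univ]
  rw [← Fintype.prod_sum (fun (_ : {v // v ∈ S}) (w : {v // v ∈ R}) =>
    (Polynomial.X : Polynomial ℚ) ^ ((ρ R w : Fin _) : ℕ))]
  have h2 : ∑ w : {v // v ∈ R}, (Polynomial.X : Polynomial ℚ) ^ ((ρ R w : Fin _) : ℕ)
      = qNat R.card := by
    rw [Fintype.sum_equiv (ρ R) _ (fun i : Fin R.card => (Polynomial.X : Polynomial ℚ) ^ (i : ℕ))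
      (fun w => rfl), qNat, ← Fin.sum_univ_eq_sum_range]
  simp only [h2]
  rw [Finset.prod_const, Finset.card_univ, cardS]

lemma fixedS (ρ : GRanking V) (R : Finset V) (hr : 1 ≤ R.card) (hlt : R.card < Fintype.card V)
    (S : Finset V) (hS : S ⊆ Finset.univ \ R) :
    ∑ f ∈ Finset.univ.filter (fun f : V → V => GForest R f ∧ glevelSet R f 1 = S),
        (Polynomial.X : Polynomial ℚ) ^ glbar ρ R f
      = Polynomial.X ^ (R.card * (Fintype.card V - R.card - S.card)) * qNat R.card ^ S.card
        * ∑ f' ∈ Finset.univ.filter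
            (fun f' : {v : V // v ∈ Finset.univ \ R} → {v : V // v ∈ Finset.univ \ R} =>
              GForest (liftSet R S) f'),
            (Polynomial.X : Polynomial ℚ) ^ glbar (subRanking ρ R) (liftSet R S) f' := by
  obtain ⟨r0, hr0⟩ := Finset.card_pos.mp hr
  set W := {v : V // v ∈ Finset.univ \ R}
  -- the map from forests to pairs
  set gOf : (V → V) → ({v // v ∈ S} → {v // v ∈ R}) := fun f v =>
    if h : f ↑v ∈ R then ⟨f ↑v, h⟩ else ⟨r0, hr0⟩ with hgOf
  have step1 : ∑ f ∈ Finset.univ.filter (fun f : V → V => GForest R f ∧ glevelSet R f 1 = S),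
        (Polynomial.X : Polynomial ℚ) ^ glbar ρ R f
      = ∑ p ∈ Finset.univ.filter
          (fun p : ({v // v ∈ S} → {v // v ∈ R}) × (W → W) => GForest (liftSet R S) p.2),
          (Polynomial.X : Polynomial ℚ) ^
            (R.card * (Fintype.card V - R.card - S.card)
              + (∑ v ∈ S.attach, ((ρ R (p.1 v) : Fin _) : ℕ))
              + glbar (subRanking ρ R) (liftSet R S) p.2) := by
    refine Finset.sum_nbij' (fun f => (gOf f, sub R f)) (fun p => psi R S p.1 p.2) ?_ ?_ ?_ ?_ ?_
    · -- forward maps into target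
      intro f hf
      simp only [Finset.mem_filter, Finset.mem_univ, true_and] at hf ⊢
      rw [← subRoots_eq_liftSet hf.1 hf.2]
      exact subforest hf.1
    · -- backward maps into source
      intro p hp
      simp only [Finset.mem_filter, Finset.mem_univ, true_and] at hp ⊢
      exact ⟨psi_forest hS hp, psi_glevelSet_one hS hp⟩
    · -- left inverse
      intro f hf
      simp only [Finset.mem_filter, Finset.mem_univ, true_and] at hf
      refine psi_retract hf.1 hf.2 (gOf f) fun v => ?_
      have hv1 : (↑v : V) ∈ glevelSet R f 1 := hf.2 ▸ v.2
      have hvS : glevel R f ↑v = 1 := by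
        simp only [glevelSet, Finset.mem_filter] at hv1; exact hv1.2
      have hvR : (↑v : V) ∉ R := by
        have := glevelSet_one_subset hf.1 hv1
        rw [Finset.mem_sdiff] at this; exact this.2
      have hfv : f ↑v ∈ R := (glevel_eq_one_iff hf.1 hvR).mp hvS
      simp only [hgOf, dif_pos hfv]
    · -- right inverse
      intro p hp
      simp only [Finset.mem_filter, Finset.mem_univ, true_and] at hp
      have hmem : ∀ v : {v // v ∈ S}, psi R S p.1 p.2 ↑v ∈ R := by
        intro v
        rw [psi_S hS v.2]
        exact (p.1 ⟨↑v, v.2⟩).2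
      refine Prod.ext ?_ (psi_sub hS hp)
      show gOf (psi R S p.1 p.2) = p.1
      funext v
      simp only [hgOf, dif_pos (hmem v)]
      exact congrFun (psi_g_retract hS hmem) v
    · -- values agree
      intro f hf
      simp only [Finset.mem_filter, Finset.mem_univ, true_and] at hf
      congr 1
      have hd := glbar_decomp hf.1 ρ hr hlt
      rw [subRoots_eq_liftSet hf.1 hf.2, hf.2] at hd
      rw [hd]
      congr 1
      congr 1
      rw [← Finset.sum_attach S (fun v => gweight ρ R f (f v) - 1)]
      refine Finset.sum_congr rfl fun v hv => ?_
      have hvS : glevel R f ↑v = 1 := by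
        have hv1 : (↑v : V) ∈ glevelSet R f 1 := hf.2 ▸ v.2
        simp only [glevelSet, Finset.mem_filter] at hv1; exact hv1.2
      have hvR : (↑v : V) ∉ R := by
        have := hS v.2; rw [Finset.mem_sdiff] at this; exact this.2
      have hfv : f ↑v ∈ R := (glevel_eq_one_iff hf.1 hvR).mp hvS
      rw [gweight_root hf.1 ρ hfv]
      simp only [hgOf, dif_pos hfv]
      omega
  rw [step1]
  have step2 : Finset.univ.filter
      (fun p : ({v // v ∈ S} → {v // v ∈ R}) × (W → W) => GForest (liftSet R S) p.2)
      = (Finset.univ : Finset ({v // v ∈ S} → {v // v ∈ R})) ×ˢ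
        (Finset.univ.filter fun f' : W → W => GForest (liftSet R S) f') := by
    ext p
    simp [Finset.mem_filter, Finset.mem_product]
  rw [step2, Finset.sum_product]
  simp only [pow_add]
  rw [← Finset.sum_mul_sum]
  rw [← Finset.mul_sum, sum_ranks]

lemma card_liftSet {R S : Finset V} (hS : S ⊆ Finset.univ \ R) :
    (liftSet R S).card = S.card := by
  have h : liftSet R S = S.subtype (fun v => v ∈ Finset.univ \ R) := by
    ext w; simp [mem_liftSet, Finset.mem_subtype]
  rw [h, Finset.card_subtype, Finset.filter_true_of_mem (fun x hx => hS hx)]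

lemma Jbar_diag {n : ℕ} (hn : 1 ≤ n) : Jbar n n = 1 := by
  rw [Jbar, J, dif_neg (by omega : ¬ n = 0), dif_pos le_rfl, if_pos rfl, Nat.sub_self,
    Polynomial.reflect_one, pow_zero]

lemma base_case (ρ : GRanking V) (hV : 1 ≤ Fintype.card V) :
    Jbar (Fintype.card V) (Finset.univ : Finset V).card
      = ∑ f ∈ Finset.univ.filter (fun f : V → V => GForest Finset.univ f),
          Polynomial.X ^ glbar ρ Finset.univ f := by
  have hfilter : Finset.univ.filter (fun f : V → V => GForest Finset.univ f)
      = {fun v => v} := by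
    ext f
    simp only [Finset.mem_filter, Finset.mem_univ, true_and, Finset.mem_singleton]
    constructor
    · intro hf; funext v; exact hf.1 v (Finset.mem_univ v)
    · rintro rfl; exact ⟨fun v _ => rfl, fun v => ⟨0, Finset.mem_univ v⟩⟩
  rw [hfilter, Finset.sum_singleton, Finset.card_univ, Jbar_diag hV]
  have hzero : ∀ v : V, glevel Finset.univ (fun v => v) v = 0 := fun v =>
    Nat.sInf_eq_zero.mpr (Or.inl (Finset.mem_univ v))
  have hempty : ∀ j, 1 ≤ j → (glevelSet Finset.univ (fun v : V => v) j) = ∅ := by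
    intro j hj
    ext v
    simp only [glevelSet, Finset.mem_filter, Finset.mem_univ, true_and, hzero,
      Finset.notMem_empty, iff_false]
    omega
  have hlbar : glbar ρ Finset.univ (fun v : V => v) = 0 := by
    unfold glbar gsigma
    rw [Finset.sdiff_self]
    simp only [Finset.sum_empty, add_zero]
    refine Finset.sum_eq_zero fun i hi => Finset.sum_eq_zero fun j hj => ?_
    split_ifs with h
    · rw [hempty j (by omega), Finset.card_empty, mul_zero]
    · rfl
  rw [hlbar, pow_zero]

theorem gmain (N : ℕ) : ∀ (V : Type) [Fintype V] [DecidableEq V] (R : Finset V)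
    (ρ : GRanking V), Fintype.card V = N → 1 ≤ R.card →
    Jbar (Fintype.card V) R.card
      = ∑ f ∈ Finset.univ.filter (fun f : V → V => GForest R f),
          Polynomial.X ^ glbar ρ R f := by
  induction N using Nat.strong_induction_on with
  | _ N IH =>
    intro V _ _ R ρ hcard hr
    rcases eq_or_lt_of_le (Finset.card_le_univ R) with heq | hlt
    · -- base case : R = univ
      have hRuniv : R = Finset.univ := Finset.eq_univ_of_card R heq
      subst hRuniv
      exact base_case ρ (by omega)
    · -- inductive case
      have hWne : (Finset.univ \ R).Nonempty := by
        rw [← Finset.card_pos, Finset.card_sdiff_of_subset (Finset.subset_univ R), Finset.card_univ]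
        omega
      have hmaps : ∀ f ∈ Finset.univ.filter (fun f : V → V => GForest R f),
          glevelSet R f 1 ∈ (Finset.univ \ R).powerset.filter (·.Nonempty) := by
        intro f hf
        simp only [Finset.mem_filter, Finset.mem_univ, true_and] at hf
        rw [Finset.mem_filter, Finset.mem_powerset]
        refine ⟨glevelSet_one_subset hf, ?_⟩
        obtain ⟨v, hv⟩ := hWne
        have hvR : v ∉ R := by rw [Finset.mem_sdiff] at hv; exact hv.2
        have hL : 1 ≤ glevel R f v := by
          rcases Nat.eq_zero_or_pos (glevel R f v) with h0 | h1
          · exact absurd ((glevel_eq_zero hf).mp h0) hvR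
          · exact h1
        refine ⟨f^[glevel R f v - 1] v, ?_⟩
        simp only [glevelSet, Finset.mem_filter, Finset.mem_univ, true_and]
        rw [glevel_iterate hf v _ (by omega)]
        omega
      rw [← Finset.sum_fiberwise_of_maps_to hmaps
        (fun f => (Polynomial.X : Polynomial ℚ) ^ glbar ρ R f)]
      have hstep : ∀ S ∈ (Finset.univ \ R).powerset.filter (·.Nonempty),
          ∑ f ∈ (Finset.univ.filter (fun f : V → V => GForest R f)).filter
              (fun f => glevelSet R f 1 = S), (Polynomial.X : Polynomial ℚ) ^ glbar ρ R f
          = Polynomial.X ^ (R.card * (Fintype.card V - R.card - S.card)) * qNat R.card ^ S.card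
            * Jbar (Fintype.card V - R.card) S.card := by
        intro S hSmem
        rw [Finset.mem_filter, Finset.mem_powerset] at hSmem
        obtain ⟨hSsub, hSne⟩ := hSmem
        rw [Finset.filter_filter, fixedS ρ R hr hlt S hSsub]
        congr 1
        have hIH := IH (N - R.card) (by omega) {v : V // v ∈ Finset.univ \ R} (liftSet R S)
          (subRanking ρ R) (by rw [cardW, hcard])
          (by rw [card_liftSet hSsub]; exact Finset.card_pos.mpr hSne)
        rw [cardW, card_liftSet hSsub] at hIH
        exact hIH.symm
      rw [Finset.sum_congr rfl hstep]
      have hmaps2 : ∀ S ∈ (Finset.univ \ R).powerset.filter (·.Nonempty),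
          S.card ∈ Finset.Icc 1 (Fintype.card V - R.card) := by
        intro S hS
        rw [Finset.mem_filter, Finset.mem_powerset] at hS
        rw [Finset.mem_Icc]
        refine ⟨Finset.card_pos.mpr hS.2, ?_⟩
        calc S.card ≤ (Finset.univ \ R).card := Finset.card_le_card hS.1
          _ = Fintype.card V - R.card := by
            rw [Finset.card_sdiff_of_subset (Finset.subset_univ R), Finset.card_univ]
      rw [← Finset.sum_fiberwise_of_maps_to hmaps2
        (fun S => (Polynomial.X : Polynomial ℚ) ^ (R.card * (Fintype.card V - R.card - S.card))
          * qNat R.card ^ S.card * Jbar (Fintype.card V - R.card) S.card)]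
      have hinner : ∀ s ∈ Finset.Icc 1 (Fintype.card V - R.card),
          ∑ S ∈ ((Finset.univ \ R).powerset.filter (·.Nonempty)).filter (fun S => S.card = s),
            ((Polynomial.X : Polynomial ℚ) ^ (R.card * (Fintype.card V - R.card - S.card))
              * qNat R.card ^ S.card * Jbar (Fintype.card V - R.card) S.card)
          = ((Fintype.card V - R.card).choose s)
              • ((Polynomial.X : Polynomial ℚ) ^ (R.card * (Fintype.card V - R.card - s))
                * qNat R.card ^ s * Jbar (Fintype.card V - R.card) s) := by
        intro s hs
        rw [Finset.mem_Icc] at hs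
        have hfilter_eq : ((Finset.univ \ R).powerset.filter (·.Nonempty)).filter
            (fun S => S.card = s) = (Finset.univ \ R).powersetCard s := by
          ext S
          rw [Finset.filter_filter, Finset.mem_filter, Finset.mem_powerset,
            Finset.mem_powersetCard]
          constructor
          · rintro ⟨h1, _, h3⟩; exact ⟨h1, h3⟩
          · rintro ⟨h1, h2⟩
            exact ⟨h1, Finset.card_pos.mp (by omega), h2⟩
        rw [hfilter_eq]
        have hconst : ∀ S ∈ (Finset.univ \ R).powersetCard s,
            ((Polynomial.X : Polynomial ℚ) ^ (R.card * (Fintype.card V - R.card - S.card))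
              * qNat R.card ^ S.card * Jbar (Fintype.card V - R.card) S.card)
            = ((Polynomial.X : Polynomial ℚ) ^ (R.card * (Fintype.card V - R.card - s))
              * qNat R.card ^ s * Jbar (Fintype.card V - R.card) s) := by
          intro S hS
          rw [Finset.mem_powersetCard] at hS
          rw [hS.2]
        rw [Finset.sum_congr rfl hconst, Finset.sum_const, Finset.card_powersetCard,
          Finset.card_sdiff_of_subset (Finset.subset_univ R), Finset.card_univ]
      rw [Finset.sum_congr rfl hinner, Jbar_rec hr hlt]
      refine Finset.sum_congr rfl fun j hj => ?_
      rw [nsmul_eq_mul]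
      ring

end Main

open scoped Classical in
/-- for `n ≥ 2`, `1 ≤ r ≤ n − 1`, `R ⊆ {1,…,n}` with `|R| = r`,
and any ranking `ρ`, `J̄_n^{(r)}(q) = ∑_F q^{l̄_ρ(F)}`, the sum being over all
rooted forests on `{1, …, n}` with root set `R`. -/
theorem Jbar_eq_sum_forests (n r : ℕ) (hn : 2 ≤ n) (hr : 1 ≤ r) (hrn : r + 1 ≤ n)
    (R : Finset (Fin n)) (hR : R.card = r) (ρ : Ranking n) :
    Jbar n r =
      ∑ f ∈ Finset.univ.filter (fun f : Fin n → Fin n => IsForest R f),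
        Polynomial.X ^ levelStatBar ρ R f := by
  have hmain := gmain n (Fin n) R ρ (by simp) (by omega)
  rw [Fintype.card_fin, hR] at hmain
  rw [hmain]
  refine Finset.sum_congr (Finset.filter_congr fun f _ => Iff.rfl) fun f hf => ?_
  congr 1
  have h1 : gsigma R f = sigmaHat R f := by
    unfold gsigma sigmaHat
    rw [Fintype.card_fin]
    rfl
  have h2 : ∑ v ∈ Finset.univ \ R, (gweight ρ R f (f v) - 1)
      = ∑ v ∈ Finset.univ \ R, (weight ρ R f (f v) - 1) := rfl
  unfold glbar levelStatBar
  rw [h1, h2]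

end
end
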